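/- arXiv:2106.02368 — 4 statements merged into one kernel-verified Lean document; each statement's English description precedes it below -/
import Mathlib

section
/- Suppose there exist b₀ ∈ (0,1] and s₁ > 0 such that s·γ'(s) + b₀·γ(s) ≤ 0 for all s ≥ s₁. Then for every s₀ > 0 there is a constant K₀(s₀) > 0 such that s·γ(s) + (b₀ − 1)·Γ(s) ≤ K₀(s₀) for all s ≥ s₀. -/
/-!
Put `F s = s γ(s) + (b₀ - 1) Γ(s)`. Then `F' = s γ' + b₀ γ ≤ 0` on `[s₁, ∞)`, so `F` is
antitone there, and on the compact interval `[s₀, max s₀ s₁]` it is bounded by continuity.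
-/

open Set intervalIntegral

theorem hasDerivAt_integral_of_continuousOn {E : Type*} [NormedAddCommGroup E]
    [NormedSpace ℝ E] [CompleteSpace E] {f : ℝ → E} {U : Set ℝ} {a b : ℝ}
    (hU : IsOpen U) (hf : ContinuousOn f U) (hab : uIcc a b ⊆ U) :
    HasDerivAt (fun u => ∫ x in a..u, f x) (f b) b :=
  have hb : b ∈ U := hab right_mem_uIcc
  integral_hasDerivAt_right (hf.mono hab).intervalIntegrable
    (hf.stronglyMeasurableAtFilter hU b hb) (hf.continuousAt (hU.mem_nhds hb))

theorem hasDerivAt_mul_self_add_const_mul_integral {γ γ' : ℝ → ℝ} {a c s : ℝ}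
    (hderiv : ∀ x, 0 < x → HasDerivAt γ (γ' x) x) (ha : 0 < a) (hs : 0 < s) :
    HasDerivAt (fun u => u * γ u + c * ∫ η in a..u, γ η) (s * γ' s + (1 + c) * γ s) s := by
  have hγ : ContinuousOn γ (Ioi 0) := fun x hx => (hderiv x hx).continuousAt.continuousWithinAt
  have hΓ : HasDerivAt (fun u => ∫ η in a..u, γ η) (γ s) s :=
    hasDerivAt_integral_of_continuousOn isOpen_Ioi hγ fun x hx => (lt_min ha hs).trans_le hx.1
  exact (((hasDerivAt_id' s).mul (hderiv s hs)).add (hΓ.const_mul c)).congr_deriv (by ring)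

theorem bddAbove_image_Ici_of_continuousOn_of_antitoneOn {F : ℝ → ℝ} {a t : ℝ}
    (hF : ContinuousOn F (Icc a t)) (hanti : AntitoneOn F (Ici t)) :
    BddAbove (F '' Ici a) := by
  have hcover : Ici a ⊆ Icc a t ∪ Ici t := fun s hs =>
    (le_total s t).imp (fun h => ⟨hs, h⟩) id
  have htail : BddAbove (F '' Ici t) :=
    ⟨F t, forall_mem_image.2 fun s hs => hanti self_mem_Ici hs hs⟩
  refine ((isCompact_Icc.image_of_continuousOn hF).bddAbove.union htail).mono ?_
  rw [← image_union]
  exact image_mono hcover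

theorem stmt_3_general (γ γ' : ℝ → ℝ) (b₀ s₁ : ℝ)
    (hderiv : ∀ s, 0 < s → HasDerivAt γ (γ' s) s)
    (hcond : ∀ s, s₁ ≤ s → s * γ' s + b₀ * γ s ≤ 0) :
    ∀ s₀ : ℝ, 0 < s₀ → ∃ K > 0, ∀ s, s₀ ≤ s →
      s * γ s + (b₀ - 1) * (∫ η in (1:ℝ)..s, γ η) ≤ K := by
  intro s₀ hs₀
  set F : ℝ → ℝ := fun s => s * γ s + (b₀ - 1) * ∫ η in (1:ℝ)..s, γ η
  have hF : ∀ s, 0 < s → HasDerivAt F (s * γ' s + b₀ * γ s) s := fun s hs => by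
    simpa only [add_sub_cancel] using
      hasDerivAt_mul_self_add_const_mul_integral (c := b₀ - 1) hderiv one_pos hs
  have hFcont : ContinuousOn F (Ici s₀) := fun s hs =>
    (hF s (hs₀.trans_le hs)).continuousAt.continuousWithinAt
  have hanti : AntitoneOn F (Ici (max s₀ s₁)) := by
    refine antitoneOn_of_hasDerivWithinAt_nonpos (f' := fun s => s * γ' s + b₀ * γ s)
      (convex_Ici _) (hFcont.mono (Ici_subset_Ici.2 (le_max_left _ _)))
      (fun s hs => ?_) (fun s hs => ?_)
    all_goals rw [interior_Ici] at hs
    · exact (hF s (hs₀.trans_le ((le_max_left _ _).trans hs.le))).hasDerivWithinAt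
    · exact hcond s ((le_max_right _ _).trans hs.le)
  obtain ⟨K, hK1, hK⟩ := (bddAbove_image_Ici_of_continuousOn_of_antitoneOn
    (hFcont.mono Icc_subset_Ici_self) hanti).exists_ge 1
  exact ⟨K, one_pos.trans_le hK1, fun s hs => hK _ (mem_image_of_mem F hs)⟩

theorem stmt_3 (γ γ' : ℝ → ℝ) (b₀ s₁ : ℝ)
    (hderiv : ∀ s, 0 < s → HasDerivAt γ (γ' s) s)
    (hderivcont : ContinuousOn γ' (Set.Ioi 0))
    (hpos : ∀ s, 0 < s → 0 < γ s)
    (hb₀ : b₀ ∈ Set.Ioc (0:ℝ) 1) (hs₁ : 0 < s₁)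
    (hcond : ∀ s, s₁ ≤ s → s * γ' s + b₀ * γ s ≤ 0) :
    ∀ s₀ : ℝ, 0 < s₀ → ∃ K > 0, ∀ s, s₀ ≤ s →
      s * γ s + (b₀ - 1) * (∫ η in (1:ℝ)..s, γ η) ≤ K :=
  stmt_3_general γ γ' b₀ s₁ hderiv hcond
end

section
/- Suppose there are constants l > 0 and 0 < B_l ≤ A_l < ∞ with (1−l)·A_l < B_l, such that liminf_{s→∞} s^l γ(s) = B_l and limsup_{s→∞} s^l γ(s) = A_l. Then there exist b₀ ∈ (0,1] and, for every s₀ > 0, a constant K₀(s₀) > 0 such that s·γ(s) + (b₀ − 1)·Γ(s) ≤ K₀(s₀) for all s ≥ s₀. -/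
/-!
Write `s * γ s = s ^ (1 - l) * (s ^ l * γ s)`; eventually `s ^ l * γ s` lies in `[B', A']` with
`(1 - l) * A' < B'`. If `l ≥ 1` the factor `s ^ (1 - l)` is at most `1`, so `s * γ s` is eventually
bounded and `b₀ = 1` works. If `l < 1`, then `s * γ s ≤ A' * s ^ (1 - l)` while
`(1 - l) * Γ s ≥ B' * s ^ (1 - l) - const`, so with `c = (1 - l) * A' / B' < 1` the growing terms
of `s * γ s - c * Γ s` cancel and `b₀ = 1 - c` works. On the compact part `[s₀, S]` the
expression is continuous, hence bounded.
-/

open Filter Set MeasureTheory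

namespace Real

variable {ι : Type*} {F : Filter ι} {u : ι → ℝ} {a b : ℝ}

/- An unbounded function has `limsup`/`liminf` equal to the junk value `0` on `ℝ`, so a nonzero
value certifies boundedness. -/
theorem eventually_lt_of_limsup_eq (hu : limsup u F = a) (ha : a ≠ 0) (hab : a < b) :
    ∀ᶠ x in F, u x < b := by
  have hbdd : F.IsBoundedUnder (· ≤ ·) u := by
    by_contra h
    exact ha (hu ▸ limsup_of_not_isBoundedUnder h)
  exact eventually_lt_of_limsup_lt (hu ▸ hab) hbdd

theorem eventually_gt_of_liminf_eq (hu : liminf u F = a) (ha : a ≠ 0) (hba : b < a) :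
    ∀ᶠ x in F, b < u x := by
  have hbdd : F.IsBoundedUnder (· ≥ ·) u := by
    by_contra h
    exact ha (hu ▸ liminf_of_not_isBoundedUnder h)
  exact eventually_lt_of_lt_liminf (hu ▸ hba) hbdd

end Real

theorem exists_pos_mul_add_lt_sub {k a b : ℝ} (h : k * a < b) :
    ∃ ε > 0, k * (a + ε) < b - ε := by
  refine ⟨(b - k * a) / (2 * (|k| + 1)), by positivity, ?_⟩
  have hk : k * ((b - k * a) / (2 * (|k| + 1))) ≤ |k| * ((b - k * a) / (2 * (|k| + 1))) :=
    mul_le_mul_of_nonneg_right (le_abs_self k) (by positivity)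
  have hε : (|k| + 1) * ((b - k * a) / (2 * (|k| + 1))) = (b - k * a) / 2 := by
    field_simp
  nlinarith

theorem mul_eq_rpow_one_sub_mul_rpow_mul {x : ℝ} (hx : 0 < x) (l y : ℝ) :
    x * y = x ^ (1 - l) * (x ^ l * y) := by
  rw [← mul_assoc, ← Real.rpow_add hx, sub_add_cancel, Real.rpow_one]

section Primitive

variable {γ : ℝ → ℝ} {c : ℝ}

theorem ContinuousOn.intervalIntegrable_of_Ioi (hγ : ContinuousOn γ (Ioi c)) {a b : ℝ}
    (ha : c < a) (hb : c < b) : IntervalIntegrable γ volume a b :=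
  (hγ.mono fun _ hx => (lt_min ha hb).trans_le hx.1).intervalIntegrable

theorem ContinuousOn.continuousOn_primitive_Ioi (hγ : ContinuousOn γ (Ioi c)) {a : ℝ}
    (ha : c < a) : ContinuousOn (fun s => ∫ η in a..s, γ η) (Ioi c) := fun s hs =>
  (intervalIntegral.integral_hasDerivAt_right (hγ.intervalIntegrable_of_Ioi ha hs)
    (hγ.stronglyMeasurableAtFilter isOpen_Ioi s hs)
    (hγ.continuousAt (isOpen_Ioi.mem_nhds hs))).continuousAt.continuousWithinAt

theorem mul_rpow_sub_le_integral {B l S s : ℝ} (hl : l < 1) (hS : 0 < S) (hSs : S ≤ s)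
    (hγ : IntervalIntegrable γ volume S s) (hB : ∀ u ∈ Icc S s, B ≤ u ^ l * γ u) :
    B * (s ^ (1 - l) - S ^ (1 - l)) ≤ (1 - l) * ∫ η in S..s, γ η := by
  have hpow : ∫ η in S..s, B * η ^ (-l) = B * ((s ^ (1 - l) - S ^ (1 - l)) / (1 - l)) := by
    rw [intervalIntegral.integral_const_mul, integral_rpow (Or.inl (by linarith)),
      neg_add_eq_sub]
  have hmono : ∫ η in S..s, B * η ^ (-l) ≤ ∫ η in S..s, γ η := by
    refine intervalIntegral.integral_mono_on hSs ?_ hγ fun u hu => ?_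
    · refine ContinuousOn.intervalIntegrable fun x hx => ?_
      have hx0 : 0 < x := (lt_min hS (hS.trans_le hSs)).trans_le hx.1
      exact (continuousAt_const.mul
        (Real.continuousAt_rpow_const x (-l) (Or.inl hx0.ne'))).continuousWithinAt
    · have hu0 : 0 < u := hS.trans_le hu.1
      rw [Real.rpow_neg hu0.le, ← div_eq_mul_inv, div_le_iff₀ (Real.rpow_pos_of_pos hu0 l),
        mul_comm]
      exact hB u hu
  have h1l : 0 < 1 - l := by linarith
  calc B * (s ^ (1 - l) - S ^ (1 - l))
      = (1 - l) * (B * ((s ^ (1 - l) - S ^ (1 - l)) / (1 - l))) := by field_simp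
    _ ≤ (1 - l) * ∫ η in S..s, γ η := by
      rw [← hpow]; exact mul_le_mul_of_nonneg_left hmono h1l.le

end Primitive

theorem ContinuousOn.exists_pos_forall_le_of_eventually_le {g : ℝ → ℝ} {a C : ℝ}
    (hg : ContinuousOn g (Ici a)) (hC : ∀ᶠ x in atTop, g x ≤ C) :
    ∃ K > 0, ∀ x, a ≤ x → g x ≤ K := by
  obtain ⟨S, hS⟩ := eventually_atTop.1 hC
  obtain ⟨M, hM⟩ := isCompact_Icc.bddAbove_image (hg.mono (Icc_subset_Ici_self : Icc a S ⊆ _))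
  refine ⟨max (max M C) 1, by positivity, fun x hx => ?_⟩
  rcases le_total x S with hxS | hSx
  · exact (hM (mem_image_of_mem g ⟨hx, hxS⟩)).trans ((le_max_left _ _).trans (le_max_left _ _))
  · exact (hS x hSx).trans ((le_max_right _ _).trans (le_max_left _ _))

section Tail

variable {γ : ℝ → ℝ} {l A B : ℝ}

theorem eventually_mul_le_of_one_le (hl : 1 ≤ l)
    (hpos : ∀ᶠ s in atTop, 0 < s ^ l * γ s) (hA : ∀ᶠ s in atTop, s ^ l * γ s ≤ A) :
    ∀ᶠ s in atTop, s * γ s ≤ A := by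
  filter_upwards [hpos, hA, eventually_ge_atTop 1] with s hs_pos hs_le hs1
  rw [mul_eq_rpow_one_sub_mul_rpow_mul (zero_lt_one.trans_le hs1) l]
  calc s ^ (1 - l) * (s ^ l * γ s) ≤ 1 * (s ^ l * γ s) :=
        mul_le_mul_of_nonneg_right (Real.rpow_le_one_of_one_le_of_nonpos hs1 (by linarith))
          hs_pos.le
    _ ≤ A := by rwa [one_mul]

theorem exists_eventually_mul_sub_mul_integral_le (hl : l < 1) (hγ : ContinuousOn γ (Ioi 0))
    {c : ℝ} (hc : 0 ≤ c) (hcAB : (1 - l) * A ≤ c * B)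
    (hA : ∀ᶠ s in atTop, s ^ l * γ s ≤ A) (hB : ∀ᶠ s in atTop, B ≤ s ^ l * γ s) :
    ∃ C, ∀ᶠ s in atTop, s * γ s - c * ∫ η in (1:ℝ)..s, γ η ≤ C := by
  obtain ⟨S₀, hS₀⟩ := eventually_atTop.1 (hA.and hB)
  set S := max S₀ 1
  have hS : 0 < S := zero_lt_one.trans_le (le_max_right _ _)
  have h1l : 0 < 1 - l := by linarith
  refine ⟨c * (B * S ^ (1 - l) / (1 - l) - ∫ η in (1:ℝ)..S, γ η), ?_⟩
  filter_upwards [eventually_ge_atTop S] with s hSs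
  have hs : 0 < s := hS.trans_le hSs
  have hbounds : ∀ u ∈ Icc S s, u ^ l * γ u ≤ A ∧ B ≤ u ^ l * γ u :=
    fun u hu => hS₀ u ((le_max_left _ _).trans hu.1)
  have hupper : s * γ s ≤ s ^ (1 - l) * A := by
    rw [mul_eq_rpow_one_sub_mul_rpow_mul hs l]
    exact mul_le_mul_of_nonneg_left (hbounds s ⟨hSs, le_rfl⟩).1 (by positivity)
  have hlower := mul_rpow_sub_le_integral hl hS hSs (hγ.intervalIntegrable_of_Ioi hS hs)
    fun u hu => (hbounds u hu).2
  have hsplit : ∫ η in (1:ℝ)..s, γ η = (∫ η in (1:ℝ)..S, γ η) + ∫ η in S..s, γ η :=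
    (intervalIntegral.integral_add_adjacent_intervals
      (hγ.intervalIntegrable_of_Ioi one_pos hS) (hγ.intervalIntegrable_of_Ioi hS hs)).symm
  have hgrowth : s ^ (1 - l) * ((1 - l) * A) ≤ s ^ (1 - l) * (c * B) :=
    mul_le_mul_of_nonneg_left hcAB (by positivity)
  rw [hsplit, ← mul_le_mul_iff_right₀ h1l]
  have hdiv : (1 - l) * (B * S ^ (1 - l) / (1 - l)) = B * S ^ (1 - l) := by field_simp
  nlinarith [mul_le_mul_of_nonneg_left hlower hc]

end Tail

theorem exists_eventually_mul_sub_mul_integral_le_of_liminf_limsup {γ : ℝ → ℝ} {l A B : ℝ}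
    (hγ : ContinuousOn γ (Ioi 0)) (hB : 0 < B) (hAB : B ≤ A) (hcond : (1 - l) * A < B)
    (hliminf : liminf (fun s : ℝ => s ^ l * γ s) atTop = B)
    (hlimsup : limsup (fun s : ℝ => s ^ l * γ s) atTop = A) :
    ∃ c ∈ Ico (0:ℝ) 1, ∃ C, ∀ᶠ s in atTop, s * γ s - c * ∫ η in (1:ℝ)..s, γ η ≤ C := by
  have hA : 0 < A := hB.trans_le hAB
  rcases le_or_gt 1 l with hl | hl
  · refine ⟨0, ⟨le_rfl, one_pos⟩, A + 1, ?_⟩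
    have hpos := Real.eventually_gt_of_liminf_eq hliminf hB.ne' hB
    have hle := (Real.eventually_lt_of_limsup_eq hlimsup hA.ne' (lt_add_one A)).mono
      fun _ hs => hs.le
    simpa using eventually_mul_le_of_one_le hl hpos hle
  · obtain ⟨ε, hε, hεAB⟩ := exists_pos_mul_add_lt_sub hcond
    have h1l : 0 < 1 - l := by linarith
    have hAε : 0 < (1 - l) * (A + ε) := by positivity
    have hBε : 0 < B - ε := hAε.trans hεAB
    have hc0 : 0 ≤ (1 - l) * (A + ε) / (B - ε) := div_nonneg hAε.le hBε.le
    refine ⟨_, ⟨hc0, (div_lt_one hBε).2 hεAB⟩, ?_⟩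
    refine exists_eventually_mul_sub_mul_integral_le hl hγ hc0
      (div_mul_cancel₀ _ hBε.ne').ge ?_ ?_
    · exact (Real.eventually_lt_of_limsup_eq hlimsup hA.ne' (by linarith)).mono fun _ hs => hs.le
    · exact (Real.eventually_gt_of_liminf_eq hliminf hB.ne' (by linarith)).mono fun _ hs => hs.le

theorem stmt_4_general (γ γ' : ℝ → ℝ) (l Al Bl : ℝ)
    (hderiv : ∀ s, 0 < s → HasDerivAt γ (γ' s) s)
    (hBl : 0 < Bl) (hAB : Bl ≤ Al)
    (hcond : (1 - l) * Al < Bl)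
    (hliminf : Filter.liminf (fun s : ℝ => s ^ l * γ s) atTop = Bl)
    (hlimsup : Filter.limsup (fun s : ℝ => s ^ l * γ s) atTop = Al) :
    ∃ b₀ ∈ Set.Ioc (0:ℝ) 1, ∀ s₀ : ℝ, 0 < s₀ → ∃ K > 0, ∀ s, s₀ ≤ s →
      s * γ s + (b₀ - 1) * (∫ η in (1:ℝ)..s, γ η) ≤ K := by
  have hγ : ContinuousOn γ (Ioi 0) := fun s hs =>
    (hderiv s hs).continuousAt.continuousWithinAt
  obtain ⟨c, ⟨hc0, hc1⟩, C, hC⟩ :=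
    exists_eventually_mul_sub_mul_integral_le_of_liminf_limsup hγ hBl hAB hcond hliminf hlimsup
  refine ⟨1 - c, ⟨by linarith, by linarith⟩, fun s₀ hs₀ => ?_⟩
  have hcont : ContinuousOn (fun s => s * γ s + (1 - c - 1) * ∫ η in (1:ℝ)..s, γ η) (Ioi 0) :=
    (continuousOn_id.mul hγ).add (continuousOn_const.mul (hγ.continuousOn_primitive_Ioi one_pos))
  refine (hcont.mono fun s hs => hs₀.trans_le hs).exists_pos_forall_le_of_eventually_le
    (C := C) ?_
  filter_upwards [hC] with s hs
  linarith

theorem stmt_4 (γ γ' : ℝ → ℝ) (l Al Bl : ℝ)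
    (hderiv : ∀ s, 0 < s → HasDerivAt γ (γ' s) s)
    (hderivcont : ContinuousOn γ' (Set.Ioi 0))
    (hpos : ∀ s, 0 < s → 0 < γ s)
    (hl : 0 < l) (hBl : 0 < Bl) (hAB : Bl ≤ Al)
    (hcond : (1 - l) * Al < Bl)
    (hliminf : Filter.liminf (fun s : ℝ => s ^ l * γ s) atTop = Bl)
    (hlimsup : Filter.limsup (fun s : ℝ => s ^ l * γ s) atTop = Al) :
    ∃ b₀ ∈ Set.Ioc (0:ℝ) 1, ∀ s₀ : ℝ, 0 < s₀ → ∃ K > 0, ∀ s, s₀ ≤ s →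
      s * γ s + (b₀ - 1) * (∫ η in (1:ℝ)..s, γ η) ≤ K :=
  stmt_4_general γ γ' l Al Bl hderiv hBl hAB hcond hliminf hlimsup
end

section
/- Let θ > 1, b ≥ 0, c ∈ ℝ, κ₀ ≥ 1, κ₁ ≥ 1, and δ₀ ∈ ℝ satisfy δ₀ + c/(θ−1) > 0. Define δ_{j+1} = θ·δ_j + c for j ∈ ℕ. If (η_j)_{j≥0} is a sequence of positive reals with η₀ ≤ κ₁^{δ₀} and η_{j+1} ≤ κ₀ · δ_{j+1}^b · max{κ₁^{δ_{j+1}}, η_j^θ} for all j ∈ ℕ, then the sequence (η_j^{1/δ_j})_{j≥0} is bounded. -/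
/-!
Solving the affine recursion gives `δ j = A θ^j - c/(θ-1)` with `A = δ₀ + c/(θ-1) > 0`, so `δ j`
is eventually comparable to `θ^j`. Taking logarithms, `z j = max (log η_j) (δ_j log κ₁)` satisfies
`z (j+1) ≤ θ z j + O(j)`, because `log δ_{j+1} = O(j)`; linear forcing is negligible against
geometric growth, so `z j = O(θ^j)`, hence `log η_j / δ_j` is eventually bounded, and the finitely
many remaining terms do not matter.
-/

open Real Filter

section AffineRecurrence

variable {θ c : ℝ} {δ : ℕ → ℝ}

theorem affine_recurrence_closed_form (hθ : θ ≠ 1) (hδ : ∀ j, δ (j + 1) = θ * δ j + c) (j : ℕ) :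
    δ j = (δ 0 + c / (θ - 1)) * θ ^ j - c / (θ - 1) := by
  have hθ1 : θ - 1 ≠ 0 := sub_ne_zero.mpr hθ
  induction j with
  | zero => ring
  | succ j ih =>
    rw [hδ, ih, pow_succ]
    field_simp
    ring

theorem affine_recurrence_eventually_ge (hθ : 1 < θ) (hδ : ∀ j, δ (j + 1) = θ * δ j + c)
    (hA : 0 < δ 0 + c / (θ - 1)) :
    ∀ᶠ j in atTop, (δ 0 + c / (θ - 1)) / 2 * θ ^ j + 1 ≤ δ j := by
  have hgrow : Tendsto (fun j : ℕ => (δ 0 + c / (θ - 1)) / 2 * θ ^ j) atTop atTop :=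
    (tendsto_pow_atTop_atTop_of_one_lt hθ).const_mul_atTop (by positivity)
  filter_upwards [hgrow.eventually_ge_atTop (c / (θ - 1) + 1)] with j hj
  rw [affine_recurrence_closed_form hθ.ne' hδ j]
  linarith

theorem exists_affine_recurrence_succ_le_pow (hθ : 1 < θ) (hδ : ∀ j, δ (j + 1) = θ * δ j + c) :
    ∃ ρ, 1 ≤ ρ ∧ ∀ j, δ (j + 1) ≤ ρ ^ (j + 1) := by
  set B := max 1 (|δ 0 + c / (θ - 1)| + |c / (θ - 1)|)
  have hB : 1 ≤ B := le_max_left _ _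
  refine ⟨B * θ, one_le_mul_of_one_le_of_one_le hB hθ.le, fun j => ?_⟩
  have hθj : 1 ≤ θ ^ (j + 1) := one_le_pow₀ hθ.le
  calc δ (j + 1)
      ≤ (|δ 0 + c / (θ - 1)| + |c / (θ - 1)|) * θ ^ (j + 1) := by
        rw [affine_recurrence_closed_form hθ.ne' hδ]
        have := mul_le_mul_of_nonneg_right (le_abs_self (δ 0 + c / (θ - 1)))
          (by positivity : 0 ≤ θ ^ (j + 1))
        have := le_mul_of_one_le_right (abs_nonneg (c / (θ - 1))) hθj
        linarith [neg_abs_le (c / (θ - 1))]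
    _ ≤ B * θ ^ (j + 1) := by gcongr; exact le_max_right _ _
    _ ≤ B ^ (j + 1) * θ ^ (j + 1) := by gcongr; exact le_self_pow₀ hB (Nat.succ_ne_zero j)
    _ = (B * θ) ^ (j + 1) := (mul_pow B θ (j + 1)).symm

end AffineRecurrence

/-- The affine correction `S n + T` absorbs the linear forcing, leaving `v (n+1) ≤ θ v n`. -/
theorem exists_eventually_le_mul_pow_of_le_mul_add {θ K : ℝ} {z : ℕ → ℝ} (hθ : 1 < θ) (hK : 0 ≤ K)
    (hz : ∀ᶠ n in atTop, z (n + 1) ≤ θ * z n + K * (n + 1)) :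
    ∃ C, ∀ᶠ n in atTop, z n ≤ C * θ ^ n := by
  obtain ⟨N, hN⟩ := eventually_atTop.mp hz
  have hθ1 : 0 < θ - 1 := by linarith
  set S := K / (θ - 1)
  set T := (K + S) / (θ - 1)
  have hS : 0 ≤ S := by positivity
  have hT : 0 ≤ T := by positivity
  set v : ℕ → ℝ := fun n => z n + S * n + T
  have hv : ∀ n ≥ N, v (n + 1) ≤ θ * v n := by
    intro n hn
    have hST : K * (n + 1) + S * (n + 1) + T = θ * (S * n + T) := by
      simp only [S, T]; field_simp; ring
    simp only [v]; push_cast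
    linarith [hN n hn]
  refine ⟨v N / θ ^ N, eventually_atTop.mpr ⟨N, fun n hn => ?_⟩⟩
  have hvn : v n ≤ v N / θ ^ N * θ ^ n := by
    induction n, hn using Nat.le_induction with
    | base => rw [div_mul_cancel₀ _ (pow_ne_zero N (by positivity))]
    | succ n hn ih =>
      calc v (n + 1) ≤ θ * v n := hv n hn
        _ ≤ θ * (v N / θ ^ N * θ ^ n) := by gcongr
        _ = v N / θ ^ N * θ ^ (n + 1) := by ring
  have : 0 ≤ S * n + T := by positivity
  simp only [v] at hvn
  linarith

section Step

variable {θ b c κ₀ κ₁ η η' d d' : ℝ}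

theorem log_le_of_le_mul_rpow_mul_max (hκ₀ : 0 < κ₀) (hκ₁ : 0 < κ₁) (hd' : 0 < d') (hη : 0 < η)
    (hη'pos : 0 < η') (hη' : η' ≤ κ₀ * d' ^ b * max (κ₁ ^ d') (η ^ θ)) :
    log η' ≤ log κ₀ + b * log d' + max (d' * log κ₁) (θ * log η) := by
  have hmax : log (max (κ₁ ^ d') (η ^ θ)) ≤ max (d' * log κ₁) (θ * log η) := by
    rcases max_choice (κ₁ ^ d') (η ^ θ) with h | h <;> rw [h]
    · rw [log_rpow hκ₁]; exact le_max_left _ _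
    · rw [log_rpow hη]; exact le_max_right _ _
  have hpos : 0 < max (κ₁ ^ d') (η ^ θ) := lt_max_of_lt_left (rpow_pos_of_pos hκ₁ _)
  calc log η' ≤ log (κ₀ * d' ^ b * max (κ₁ ^ d') (η ^ θ)) := log_le_log hη'pos hη'
    _ = log κ₀ + b * log d' + log (max (κ₁ ^ d') (η ^ θ)) := by
      rw [log_mul (by positivity) hpos.ne', log_mul hκ₀.ne' (by positivity), log_rpow hd']
    _ ≤ _ := by gcongr

/-- Passing to `max (log η) (d * log κ₁)` makes the recursion linear up to a logarithmic term. -/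
theorem max_log_le_of_le_mul_rpow_mul_max (hθ : 0 ≤ θ) (hb : 0 ≤ b) (hκ₀ : 1 ≤ κ₀) (hκ₁ : 1 ≤ κ₁)
    (hd : d' = θ * d + c) (hd' : 1 ≤ d') (hη : 0 < η) (hη'pos : 0 < η')
    (hη' : η' ≤ κ₀ * d' ^ b * max (κ₁ ^ d') (η ^ θ)) :
    max (log η') (d' * log κ₁) ≤
      θ * max (log η) (d * log κ₁) + (log κ₀ + |c| * log κ₁ + b * log d') := by
  have hlog := log_le_of_le_mul_rpow_mul_max (by linarith) (by linarith) (by linarith) hη hη'pos hη'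
  have hL : 0 ≤ log κ₁ := log_nonneg hκ₁
  have hcL : c * log κ₁ ≤ |c| * log κ₁ := mul_le_mul_of_nonneg_right (le_abs_self c) hL
  have hforce : 0 ≤ log κ₀ + b * log d' :=
    add_nonneg (log_nonneg hκ₀) (mul_nonneg hb (log_nonneg hd'))
  have hZ : θ * (d * log κ₁) ≤ θ * max (log η) (d * log κ₁) := by gcongr; exact le_max_right _ _
  have hx : θ * log η ≤ θ * max (log η) (d * log κ₁) := by gcongr; exact le_max_left _ _
  have hmax : max (d' * log κ₁) (θ * log η) ≤ θ * max (log η) (d * log κ₁) + |c| * log κ₁ := by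
    refine max_le ?_ ?_
    · rw [hd]; linarith
    · linarith [mul_nonneg (abs_nonneg c) hL]
  exact max_le (by linarith) (by linarith [le_max_left (d' * log κ₁) (θ * log η)])

theorem max_log_le_add_mul_of_le_pow {ρ : ℝ} {n : ℕ} (hθ : 0 ≤ θ) (hb : 0 ≤ b) (hκ₀ : 1 ≤ κ₀)
    (hκ₁ : 1 ≤ κ₁) (hd : d' = θ * d + c) (hd' : 1 ≤ d') (hdρ : d' ≤ ρ ^ (n + 1))
    (hη : 0 < η) (hη'pos : 0 < η') (hη' : η' ≤ κ₀ * d' ^ b * max (κ₁ ^ d') (η ^ θ)) :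
    max (log η') (d' * log κ₁) ≤
      θ * max (log η) (d * log κ₁) + (log κ₀ + |c| * log κ₁ + b * log ρ) * (n + 1) := by
  have hlogd' : log d' ≤ (n + 1) * log ρ := by
    calc log d' ≤ log (ρ ^ (n + 1)) := log_le_log (by linarith) hdρ
      _ = (n + 1) * log ρ := by rw [log_pow]; push_cast; ring
  have hconst : log κ₀ + |c| * log κ₁ ≤ (log κ₀ + |c| * log κ₁) * (n + 1) := by
    have := log_nonneg hκ₀
    have := log_nonneg hκ₁
    exact le_mul_of_one_le_right (by positivity) (by linarith [(n.cast_nonneg : (0 : ℝ) ≤ n)])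
  have := mul_le_mul_of_nonneg_left hlogd' hb
  linarith [max_log_le_of_le_mul_rpow_mul_max hθ hb hκ₀ hκ₁ hd hd' hη hη'pos hη']

theorem rpow_one_div_le_exp_of_log_le {M : ℝ} (hη : 0 < η) (hd : 0 < d) (h : log η ≤ M * d) :
    η ^ (1 / d) ≤ exp M := by
  rwa [rpow_def_of_pos hη, exp_le_exp, mul_one_div, div_le_iff₀ hd]

end Step

theorem stmt_5_general (θ b c δ₀ κ₀ κ₁ : ℝ) (δ η : ℕ → ℝ)
    (hθ : 1 < θ) (hb : 0 ≤ b) (hκ₀ : 1 ≤ κ₀) (hκ₁ : 1 ≤ κ₁)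
    (hδ₀ : 0 < δ₀ + c / (θ - 1))
    (hδ0 : δ 0 = δ₀)
    (hδrec : ∀ j : ℕ, δ (j + 1) = θ * δ j + c)
    (hηpos : ∀ j : ℕ, 0 < η j)
    (hηrec : ∀ j : ℕ, η (j + 1) ≤ κ₀ * δ (j + 1) ^ b * max (κ₁ ^ δ (j + 1)) (η j ^ θ)) :
    ∃ M : ℝ, ∀ j : ℕ, η j ^ (1 / δ j) ≤ M := by
  subst hδ0
  set A := δ 0 + c / (θ - 1)
  have hlarge := affine_recurrence_eventually_ge hθ hδrec hδ₀
  obtain ⟨ρ, hρ, hδρ⟩ := exists_affine_recurrence_succ_le_pow hθ hδrec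
  set z : ℕ → ℝ := fun j => max (log (η j)) (δ j * log κ₁)
  set K := log κ₀ + |c| * log κ₁ + b * log ρ
  have hstep : ∀ᶠ j : ℕ in atTop, z (j + 1) ≤ θ * z j + K * (j + 1) := by
    filter_upwards [(tendsto_add_atTop_nat 1).eventually hlarge] with j hj
    have : 0 ≤ A / 2 * θ ^ (j + 1) := by positivity
    exact max_log_le_add_mul_of_le_pow (by linarith) hb hκ₀ hκ₁ (hδrec j) (by linarith)
      (hδρ j) (hηpos j) (hηpos (j + 1)) (hηrec j)
  have hK : 0 ≤ K := by
    have := log_nonneg hκ₀; have := log_nonneg hκ₁; have := log_nonneg hρ; positivity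
  obtain ⟨C, hC⟩ := exists_eventually_le_mul_pow_of_le_mul_add hθ hK hstep
  have hbound : ∀ᶠ j in atTop, η j ^ (1 / δ j) ≤ exp (2 * max C 0 / A) := by
    filter_upwards [hC, hlarge] with j hCj hj
    have hθj : 0 < θ ^ j := by positivity
    refine rpow_one_div_le_exp_of_log_le (hηpos j) (by nlinarith) ?_
    calc log (η j) ≤ z j := le_max_left _ _
      _ ≤ max C 0 * θ ^ j := hCj.trans (by gcongr; exact le_max_left _ _)
      _ = 2 * max C 0 / A * (A / 2 * θ ^ j) := by field_simp
      _ ≤ 2 * max C 0 / A * δ j := by gcongr; linarith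
  obtain ⟨M, hM⟩ := (isBoundedUnder_of_eventually_le hbound).bddAbove_range
  exact ⟨M, fun j => hM ⟨j, rfl⟩⟩

theorem stmt_5 (θ b c δ₀ κ₀ κ₁ : ℝ) (δ η : ℕ → ℝ)
    (hθ : 1 < θ) (hb : 0 ≤ b) (hκ₀ : 1 ≤ κ₀) (hκ₁ : 1 ≤ κ₁)
    (hδ₀ : 0 < δ₀ + c / (θ - 1))
    (hδ0 : δ 0 = δ₀)
    (hδrec : ∀ j : ℕ, δ (j + 1) = θ * δ j + c)
    (hηpos : ∀ j : ℕ, 0 < η j)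
    (hη0 : η 0 ≤ κ₁ ^ δ₀)
    (hηrec : ∀ j : ℕ, η (j + 1) ≤ κ₀ * δ (j + 1) ^ b * max (κ₁ ^ δ (j + 1)) (η j ^ θ)) :
    ∃ M : ℝ, ∀ j : ℕ, η j ^ (1 / δ j) ≤ M :=
  stmt_5_general θ b c δ₀ κ₀ κ₁ δ η hθ hb hκ₀ hκ₁ hδ₀ hδ0 hδrec hηpos hηrec
end

section
/- For all real numbers s, a > 0, one has 2·(Γ₁(s) − Γ₁(a)) − a·(Γ(s) − Γ(a)) − a·γ(a)·(s − a) ≥ 0. -/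
/-! Since `(s γ(s))' ≥ 0`, the map `η ↦ η γ(η)` is monotone. The left-hand side is
`∫ₐˢ (2ηγ(η) - aγ(η) - aγ(a)) dη`, and the integrand equals `(ηγ(η) - aγ(a)) + (η - a)γ(η)`,
whose two summands both have the sign of `η - a` (using `γ ≥ 0`). -/

open Set intervalIntegral

lemma monotoneOn_id_mul_of_hasDerivAt {γ γ' : ℝ → ℝ}
    (hderiv : ∀ x, 0 < x → HasDerivAt γ (γ' x) x)
    (hmul : ∀ x, 0 < x → 0 ≤ x * γ' x + γ x) :
    MonotoneOn (fun x => x * γ x) (Ioi 0) := by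
  have hd : ∀ x ∈ Ioi (0 : ℝ), HasDerivAt (fun x => x * γ x) (1 * γ x + x * γ' x) x :=
    fun x hx => (hasDerivAt_id x).mul (hderiv x hx)
  refine monotoneOn_of_hasDerivWithinAt_nonneg (convex_Ioi 0)
    (fun x hx => (hd x hx).continuousAt.continuousWithinAt)
    (fun x hx => (hd x (interior_subset hx)).hasDerivWithinAt) fun x hx => ?_
  rw [interior_Ioi] at hx
  linarith [hmul x hx]

lemma intervalIntegral.integral_nonneg_of_forall_sub_mul_nonneg {f : ℝ → ℝ} {a b : ℝ}
    (hf : ∀ x ∈ uIcc a b, 0 ≤ (b - a) * f x) : 0 ≤ ∫ x in a..b, f x := by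
  rcases lt_trichotomy a b with hab | rfl | hba
  · exact integral_nonneg hab.le fun x hx =>
      nonneg_of_mul_nonneg_right (hf x (Icc_subset_uIcc hx)) (sub_pos.2 hab)
  · simp
  · rw [integral_symm, ← integral_neg]
    exact integral_nonneg hba.le fun x hx =>
      neg_nonneg.2 (nonpos_of_mul_nonneg_right (hf x (Icc_subset_uIcc' hx)) (sub_neg.2 hba))

lemma sub_mul_two_mul_sub_nonneg {γ : ℝ → ℝ} (hmono : MonotoneOn (fun x => x * γ x) (Ioi 0))
    (hγ : ∀ x, 0 < x → 0 ≤ γ x) {a s x : ℝ} (ha : 0 < a) (hs : 0 < s) (hx : x ∈ uIcc a s) :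
    0 ≤ (s - a) * (2 * (x * γ x) - a * γ x - a * γ a) := by
  have hx0 : 0 < x := ordConnected_Ioi.uIcc_subset ha hs hx
  have hf_nonneg : a ≤ x → 0 ≤ 2 * (x * γ x) - a * γ x - a * γ a := fun h => by
    linarith [hmono ha hx0 h, mul_nonneg (sub_nonneg.2 h) (hγ x hx0)]
  have hf_nonpos : x ≤ a → 2 * (x * γ x) - a * γ x - a * γ a ≤ 0 := fun h => by
    linarith [hmono hx0 ha h, mul_nonneg (sub_nonneg.2 h) (hγ x hx0)]
  rcases le_total a s with h | h
  · rw [uIcc_of_le h] at hx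
    exact mul_nonneg (sub_nonneg.2 h) (hf_nonneg hx.1)
  · rw [uIcc_of_ge h] at hx
    exact mul_nonneg_of_nonpos_of_nonpos (sub_nonpos.2 h) (hf_nonpos hx.2)

lemma two_mul_sub_integral_eq {γ : ℝ → ℝ} (hγ : ContinuousOn γ (Ioi 0)) {s a : ℝ}
    (hs : 0 < s) (ha : 0 < a) :
    2 * ((∫ η in (1:ℝ)..s, η * γ η) - (∫ η in (1:ℝ)..a, η * γ η))
        - a * ((∫ η in (1:ℝ)..s, γ η) - (∫ η in (1:ℝ)..a, γ η)) - a * γ a * (s - a)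
      = ∫ η in a..s, (2 * (η * γ η) - a * γ η - a * γ a) := by
  have hint : ∀ {b c : ℝ}, 0 < b → 0 < c → IntervalIntegrable γ MeasureTheory.volume b c :=
    fun hb hc => (hγ.mono (ordConnected_Ioi.uIcc_subset hb hc)).intervalIntegrable
  have hint' : ∀ {b c : ℝ}, 0 < b → 0 < c →
      IntervalIntegrable (fun η => η * γ η) MeasureTheory.volume b c :=
    fun hb hc => ((continuousOn_id.mul hγ).mono
      (ordConnected_Ioi.uIcc_subset hb hc)).intervalIntegrable
  rw [integral_interval_sub_left (hint' one_pos hs) (hint' one_pos ha),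
    integral_interval_sub_left (hint one_pos hs) (hint one_pos ha),
    integral_sub (((hint' ha hs).const_mul 2).sub ((hint ha hs).const_mul a))
      intervalIntegrable_const,
    integral_sub ((hint' ha hs).const_mul 2) ((hint ha hs).const_mul a),
    integral_const_mul, integral_const_mul, integral_const, smul_eq_mul]
  ring

theorem stmt_9_general (γ γ' : ℝ → ℝ)
    (hderiv : ∀ s, 0 < s → HasDerivAt γ (γ' s) s)
    (hpos : ∀ s, 0 < s → 0 < γ s)
    (hγ₁' : ∀ s, 0 < s → 0 ≤ s * γ' s + γ s) :
    ∀ s a : ℝ, 0 < s → 0 < a →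
      0 ≤ 2 * ((∫ η in (1:ℝ)..s, η * γ η) - (∫ η in (1:ℝ)..a, η * γ η))
          - a * ((∫ η in (1:ℝ)..s, γ η) - (∫ η in (1:ℝ)..a, γ η))
          - a * γ a * (s - a) := by
  intro s a hs ha
  have hcont : ContinuousOn γ (Ioi 0) :=
    fun x hx => (hderiv x hx).continuousAt.continuousWithinAt
  rw [two_mul_sub_integral_eq hcont hs ha]
  exact integral_nonneg_of_forall_sub_mul_nonneg fun x hx =>
    sub_mul_two_mul_sub_nonneg (monotoneOn_id_mul_of_hasDerivAt hderiv hγ₁')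
      (fun x hx => (hpos x hx).le) ha hs hx

theorem stmt_9 (γ γ' : ℝ → ℝ)
    (hderiv : ∀ s, 0 < s → HasDerivAt γ (γ' s) s)
    (hderivcont : ContinuousOn γ' (Set.Ioi 0))
    (hpos : ∀ s, 0 < s → 0 < γ s)
    (hγ' : ∀ s, 0 < s → γ' s ≤ 0)
    (hγ₁' : ∀ s, 0 < s → 0 ≤ s * γ' s + γ s) :
    ∀ s a : ℝ, 0 < s → 0 < a →
      0 ≤ 2 * ((∫ η in (1:ℝ)..s, η * γ η) - (∫ η in (1:ℝ)..a, η * γ η))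
          - a * ((∫ η in (1:ℝ)..s, γ η) - (∫ η in (1:ℝ)..a, γ η))
          - a * γ a * (s - a) :=
  stmt_9_general γ γ' hderiv hpos hγ₁'
end
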